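/- arXiv:1404.3800 — 2 statements merged into one kernel-verified Lean document; each statement's English description precedes it below -/
import Mathlib

section
/- Let 1<α<2 and suppose |E_{α,α−m+1}(−x)| ≤ c/(1+x) for all x≥0 and a fixed integer m≥1. Then for v ∈ Ḣ^q with 0 ≤ q ≤ 2, the m-th time derivative of the homogeneous solution u(t)=Σ_j E_{α,1}(−λ_j t^α)(v,φ_j)φ_j satisfies ‖∂_t^m u(t)‖_{H} ≤ c t^{qα/2 − m} ‖v‖_{Ḣ^q}, using the differentiation identity (d^m/dt^m) E_{α,1}(−λt^α) = −λ t^{α−m} E_{α,α+1−m}(−λt^α). -/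
/-!
Expanding in the eigenbasis, the `j`-th coefficient of `∂_t^m u(t)` is bounded by
`c λ_j t^(α-m) / (1 + λ_j t^α) |(v, φ_j)|`. Writing `x = λ_j t^α`, the interpolation
`x / (1 + x) ≤ x^(q/2)` for `0 ≤ q ≤ 2` turns this into `c t^(qα/2-m) λ_j^(q/2) |(v, φ_j)|`,
and Parseval's identity sums the squares of these bounds to `c² t^(qα-2m) ‖v‖²_{Ḣ^q}`.
-/

open Real

lemma div_one_add_le_rpow {x s : ℝ} (hx : 0 ≤ x) (hs : 0 ≤ s) (hs1 : s ≤ 1) :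
    x / (1 + x) ≤ x ^ s := by
  have h1x : 0 < 1 + x := by linarith
  have hy : 0 ≤ x / (1 + x) := div_nonneg hx h1x.le
  calc x / (1 + x) ≤ (x / (1 + x)) ^ s :=
        self_le_rpow_of_le_one hy ((div_le_one h1x).2 (by linarith)) hs1
    _ ≤ x ^ s := rpow_le_rpow hy (div_le_self hx (by linarith)) hs

lemma mul_rpow_sub_div_one_add_le {lam t α r s : ℝ} (hlam : 0 < lam) (ht : 0 < t)
    (hs : 0 ≤ s) (hs1 : s ≤ 1) :
    lam * t ^ (α - r) / (1 + lam * t ^ α) ≤ t ^ (s * α - r) * lam ^ s := by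
  have htα : 0 < t ^ α := rpow_pos_of_pos ht α
  have hx : 0 < lam * t ^ α := mul_pos hlam htα
  calc lam * t ^ (α - r) / (1 + lam * t ^ α)
      = lam * t ^ α / (1 + lam * t ^ α) * t ^ (-r) := by
        rw [sub_eq_add_neg, rpow_add ht]; ring
    _ ≤ (lam * t ^ α) ^ s * t ^ (-r) :=
        mul_le_mul_of_nonneg_right (div_one_add_le_rpow hx.le hs hs1) (rpow_nonneg ht.le _)
    _ = t ^ (s * α - r) * lam ^ s := by
        rw [mul_rpow hlam.le htα.le, ← rpow_mul ht.le, mul_comm α s, sub_eq_add_neg, rpow_add ht]; ring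

lemma abs_neg_mul_rpow_mul_le {lam t α r s c E : ℝ} (hlam : 0 < lam) (ht : 0 < t)
    (hs : 0 ≤ s) (hs1 : s ≤ 1) (hc : 0 ≤ c) (hE : |E| ≤ c / (1 + lam * t ^ α)) :
    |-lam * t ^ (α - r) * E| ≤ c * t ^ (s * α - r) * lam ^ s := by
  have hpos : 0 < lam * t ^ (α - r) := mul_pos hlam (rpow_pos_of_pos ht _)
  calc |-lam * t ^ (α - r) * E| = lam * t ^ (α - r) * |E| := by
        rw [abs_mul, neg_mul, abs_neg, abs_of_pos hpos]
    _ ≤ lam * t ^ (α - r) * (c / (1 + lam * t ^ α)) :=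
        mul_le_mul_of_nonneg_left hE hpos.le
    _ = c * (lam * t ^ (α - r) / (1 + lam * t ^ α)) := by ring
    _ ≤ c * (t ^ (s * α - r) * lam ^ s) :=
        mul_le_mul_of_nonneg_left (mul_rpow_sub_div_one_add_le hlam ht hs hs1) hc
    _ = c * t ^ (s * α - r) * lam ^ s := by ring

section Parseval

variable {H : Type*} [NormedAddCommGroup H] [InnerProductSpace ℝ H] [CompleteSpace H]
  {φ : ℕ → H}

lemma Orthonormal.tsum_inner_sq_eq_norm_sq (hφ : Orthonormal ℝ φ)
    (htotal : (Submodule.span ℝ (Set.range φ)).topologicalClosure = ⊤) (w : H) :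
    ∑' j, (inner ℝ w (φ j) : ℝ) ^ 2 = ‖w‖ ^ 2 := by
  have hsp : ⊤ ≤ (Submodule.span ℝ (Set.range φ)).topologicalClosure := htotal.ge
  have key := (HilbertBasis.mk hφ hsp).tsum_inner_mul_inner w w
  simp only [HilbertBasis.coe_mk] at key
  simp_rw [real_inner_comm w (φ _), ← sq, real_inner_self_eq_norm_sq] at key
  exact key

lemma Orthonormal.norm_le_of_inner_sq_le (hφ : Orthonormal ℝ φ)
    (htotal : (Submodule.span ℝ (Set.range φ)).topologicalClosure = ⊤)
    {w : H} {a : ℕ → ℝ} {K : ℝ} (hK : 0 ≤ K) (ha : Summable a)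
    (hwa : ∀ j, (inner ℝ w (φ j) : ℝ) ^ 2 ≤ K ^ 2 * a j) :
    ‖w‖ ≤ K * √(∑' j, a j) := by
  have hKa : Summable fun j => K ^ 2 * a j := ha.mul_left _
  have hw : Summable fun j => (inner ℝ w (φ j) : ℝ) ^ 2 :=
    hKa.of_nonneg_of_le (fun _ => sq_nonneg _) hwa
  have hsq : ‖w‖ ^ 2 ≤ K ^ 2 * ∑' j, a j := by
    rw [← hφ.tsum_inner_sq_eq_norm_sq htotal, ← tsum_mul_left]
    exact hw.tsum_le_tsum hwa hKa
  simpa [sqrt_sq (norm_nonneg w), sqrt_mul (sq_nonneg K), sqrt_sq hK] using sqrt_le_sqrt hsq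

end Parseval

theorem stmt7_general {H : Type*} [NormedAddCommGroup H] [InnerProductSpace ℝ H]
    [CompleteSpace H]
    (φ : ℕ → H) (hφ : Orthonormal ℝ φ)
    (htotal : (Submodule.span ℝ (Set.range φ)).topologicalClosure = ⊤)
    (lam : ℕ → ℝ) (hlam : ∀ j, 0 < lam j)
    (α : ℝ)
    (m : ℕ)
    (Eml : ℝ → ℝ) (c : ℝ) (hE : ∀ x : ℝ, 0 ≤ x → |Eml (-x)| ≤ c / (1 + x))
    (q t : ℝ) (hq : 0 ≤ q) (hq2 : q ≤ 2) (ht : 0 < t)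
    (v w : H)
    (hw : ∀ j, (inner ℝ w (φ j) : ℝ)
        = -(lam j) * t ^ (α - m) * Eml (-(lam j * t ^ α)) * (inner ℝ v (φ j) : ℝ))
    (hv : Summable fun j => lam j ^ q * (inner ℝ v (φ j) : ℝ) ^ 2) :
    ‖w‖ ≤ c * t ^ (q * α / 2 - m) *
        Real.sqrt (∑' j, lam j ^ q * (inner ℝ v (φ j) : ℝ) ^ 2) := by
  have hc : 0 ≤ c := by simpa using (abs_nonneg _).trans (hE 0 le_rfl)
  have hK : 0 ≤ c * t ^ (q * α / 2 - m) := mul_nonneg hc (rpow_nonneg ht.le _)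
  refine hφ.norm_le_of_inner_sq_le htotal hK hv fun j => ?_
  have hcoeff : |(inner ℝ w (φ j) : ℝ)|
      ≤ c * t ^ (q / 2 * α - m) * lam j ^ (q / 2) * |(inner ℝ v (φ j) : ℝ)| := by
    rw [hw j, abs_mul]
    exact mul_le_mul_of_nonneg_right (abs_neg_mul_rpow_mul_le (hlam j) ht (by linarith)
      (by linarith) hc (hE _ (mul_pos (hlam j) (rpow_pos_of_pos ht α)).le)) (abs_nonneg _)
  have hlam_sq : (lam j ^ (q / 2)) ^ 2 = lam j ^ q := by
    rw [← rpow_natCast, ← rpow_mul (hlam j).le]; norm_num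
  calc (inner ℝ w (φ j) : ℝ) ^ 2 = |(inner ℝ w (φ j) : ℝ)| ^ 2 := (sq_abs _).symm
    _ ≤ (c * t ^ (q / 2 * α - m) * lam j ^ (q / 2) * |(inner ℝ v (φ j) : ℝ)|) ^ 2 :=
        pow_le_pow_left₀ (abs_nonneg _) hcoeff 2
    _ = (c * t ^ (q * α / 2 - m)) ^ 2 * (lam j ^ q * (inner ℝ v (φ j) : ℝ) ^ 2) := by
        rw [mul_pow, mul_pow, hlam_sq, sq_abs, div_mul_eq_mul_div]; ring

/-- Temporal regularity for the homogeneous diffusion-wave problem: assuming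
the Mittag-Leffler bound |E_{α,α−m+1}(−x)| ≤ c/(1+x), the m-th time derivative
∂_t^m u(t), whose eigencoefficients are −λ_j t^{α−m} E_{α,α+1−m}(−λ_j t^α)(v,φ_j),
satisfies ‖∂_t^m u(t)‖ ≤ c t^{qα/2−m} ‖v‖_{Ḣ^q} for v ∈ Ḣ^q, 0 ≤ q ≤ 2. -/
theorem stmt7 {H : Type*} [NormedAddCommGroup H] [InnerProductSpace ℝ H]
    [CompleteSpace H]
    (φ : ℕ → H) (hφ : Orthonormal ℝ φ)
    (htotal : (Submodule.span ℝ (Set.range φ)).topologicalClosure = ⊤)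
    (lam : ℕ → ℝ) (hlam : ∀ j, 0 < lam j)
    (α : ℝ) (hα : 1 < α) (hα2 : α < 2)
    (m : ℕ) (hm : 1 ≤ m)
    (Eml : ℝ → ℝ) (c : ℝ) (hE : ∀ x : ℝ, 0 ≤ x → |Eml (-x)| ≤ c / (1 + x))
    (q t : ℝ) (hq : 0 ≤ q) (hq2 : q ≤ 2) (ht : 0 < t)
    (v w : H)
    (hw : ∀ j, (inner ℝ w (φ j) : ℝ)
        = -(lam j) * t ^ (α - m) * Eml (-(lam j * t ^ α)) * (inner ℝ v (φ j) : ℝ))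
    (hv : Summable fun j => lam j ^ q * (inner ℝ v (φ j) : ℝ) ^ 2) :
    ‖w‖ ≤ c * t ^ (q * α / 2 - m) *
        Real.sqrt (∑' j, lam j ^ q * (inner ℝ v (φ j) : ℝ) ^ 2) :=
  stmt7_general φ hφ htotal lam hlam α m Eml c hE q t hq hq2 ht v w hw hv
end

section
/- Smoothing estimate for the inhomogeneous fractional-diffusion solution operator: let (λ_j,φ_j) be eigenpairs of a positive self-adjoint operator, 0<α<2, and assume |E_{α,α}(−x)| ≤ c/(1+x) for x≥0. Define Ē(t)χ = Σ_j t^{α−1} E_{α,α}(−λ_j t^α)(χ,φ_j)φ_j. Then for q ≥ −1 and 0 ≤ p−q ≤ 2, ‖Ē(t)χ‖_{Ḣ^p} ≤ c t^{−1+(1+(q−p)/2)α} ‖χ‖_{Ḣ^q}. -/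
/-! `Ē(t)` acts diagonally with multiplier `m_j = t^(α-1) E(-λ_j t^α)`, so it suffices to bound
`λ_j^s |m_j|`, `s = (p-q)/2`, uniformly in `j`. Writing `λ_j^s t^(α-1) = x^s t^(-1+(1-s)α)` with
`x = λ_j t^α`, this follows from `x^s ≤ 1 + x` for `0 ≤ s ≤ 1` and the decay `|E(-x)| ≤ c/(1+x)`. -/

open Real

/-- The `Ḣ^q` norm of the vector whose coefficients in the eigenbasis are `a`. -/
noncomputable def spectralSobolevNorm (lam : ℕ → ℝ) (q : ℝ) (a : ℕ → ℝ) : ℝ :=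
  √(∑' j, lam j ^ q * a j ^ 2)

theorem spectralSobolevNorm_le_of_multiplier {lam : ℕ → ℝ} (hlam : ∀ j, 0 < lam j)
    {p q C : ℝ} {m a b : ℕ → ℝ} (hab : ∀ j, a j = m j * b j)
    (hm : ∀ j, lam j ^ ((p - q) / 2) * |m j| ≤ C)
    (hb : Summable fun j => lam j ^ q * b j ^ 2) :
    spectralSobolevNorm lam p a ≤ C * spectralSobolevNorm lam q b := by
  have hC : 0 ≤ C := (mul_nonneg (rpow_nonneg (hlam 0).le _) (abs_nonneg _)).trans (hm 0)
  have hterm : ∀ j, lam j ^ p * a j ^ 2 ≤ C ^ 2 * (lam j ^ q * b j ^ 2) := by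
    intro j
    have hl := hlam j
    have hp : lam j ^ p = (lam j ^ ((p - q) / 2)) ^ 2 * lam j ^ q := by
      rw [sq, ← rpow_add hl, ← rpow_add hl]
      ring_nf
    have hsq : (lam j ^ ((p - q) / 2) * |m j|) ^ 2 ≤ C ^ 2 :=
      pow_le_pow_left₀ (by positivity) (hm j) 2
    calc lam j ^ p * a j ^ 2
        = (lam j ^ ((p - q) / 2) * |m j|) ^ 2 * (lam j ^ q * b j ^ 2) := by
          rw [hp, hab, mul_pow, mul_pow, sq_abs]; ring
      _ ≤ C ^ 2 * (lam j ^ q * b j ^ 2) := by gcongr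
  have hsum : ∑' j, lam j ^ p * a j ^ 2 ≤ C ^ 2 * ∑' j, lam j ^ q * b j ^ 2 := by
    have hnonneg : ∀ j, 0 ≤ lam j ^ p * a j ^ 2 := fun j => by have := hlam j; positivity
    rw [← tsum_mul_left]
    exact ((hb.mul_left _).of_nonneg_of_le hnonneg hterm).tsum_mono (hb.mul_left _) hterm
  calc spectralSobolevNorm lam p a ≤ √(C ^ 2 * ∑' j, lam j ^ q * b j ^ 2) := sqrt_le_sqrt hsum
    _ = C * spectralSobolevNorm lam q b := by
      rw [sqrt_mul (sq_nonneg C), sqrt_sq hC, spectralSobolevNorm]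

theorem Real.rpow_le_one_add_self {x s : ℝ} (hx : 0 ≤ x) (hs0 : 0 ≤ s) (hs1 : s ≤ 1) :
    x ^ s ≤ 1 + x := by
  rcases le_total x 1 with h | h
  · linarith [rpow_le_one hx h hs0]
  · linarith [rpow_one x ▸ rpow_le_rpow_of_exponent_le h hs1]

theorem rpow_mul_abs_le_of_abs_le_div_one_add {x s c e : ℝ} (hx : 0 ≤ x) (hs0 : 0 ≤ s)
    (hs1 : s ≤ 1) (he : |e| ≤ c / (1 + x)) : x ^ s * |e| ≤ c := by
  have hcx : 0 ≤ c / (1 + x) := (abs_nonneg e).trans he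
  calc x ^ s * |e| ≤ (1 + x) * (c / (1 + x)) :=
        mul_le_mul (rpow_le_one_add_self hx hs0 hs1) he (abs_nonneg e) (by positivity)
    _ = c := mul_div_cancel₀ c (by positivity)

theorem rpow_mul_abs_rpow_mul_le {E : ℝ → ℝ} {c α s t lam : ℝ}
    (hE : ∀ x : ℝ, 0 ≤ x → |E (-x)| ≤ c / (1 + x)) (hs0 : 0 ≤ s) (hs1 : s ≤ 1)
    (ht : 0 < t) (hlam : 0 < lam) :
    lam ^ s * |t ^ (α - 1) * E (-(lam * t ^ α))| ≤ c * t ^ (-1 + (1 - s) * α) := by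
  have htα : 0 < t ^ α := rpow_pos_of_pos ht α
  have hx : 0 ≤ lam * t ^ α := by positivity
  have hscale : lam ^ s * t ^ (α - 1) = (lam * t ^ α) ^ s * t ^ (-1 + (1 - s) * α) := by
    rw [mul_rpow hlam.le htα.le, ← rpow_mul ht.le, mul_assoc, ← rpow_add ht]
    ring_nf
  calc lam ^ s * |t ^ (α - 1) * E (-(lam * t ^ α))|
      = (lam * t ^ α) ^ s * |E (-(lam * t ^ α))| * t ^ (-1 + (1 - s) * α) := by
        rw [abs_mul, abs_of_pos (rpow_pos_of_pos ht _), ← mul_assoc, hscale]; ring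
    _ ≤ c * t ^ (-1 + (1 - s) * α) := by
      gcongr
      exact rpow_mul_abs_le_of_abs_le_div_one_add hx hs0 hs1 (hE _ hx)

theorem stmt14_general {H : Type*} [NormedAddCommGroup H] [InnerProductSpace ℝ H]
    (φ : ℕ → H)
    (lam : ℕ → ℝ) (hlam : ∀ j, 0 < lam j)
    (α : ℝ)
    (E : ℝ → ℝ) (c : ℝ) (hE : ∀ x : ℝ, 0 ≤ x → |E (-x)| ≤ c / (1 + x))
    (p q t : ℝ) (hpq0 : 0 ≤ p - q) (hpq2 : p - q ≤ 2)
    (ht : 0 < t)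
    (χ w : H)
    (hw : ∀ j, (inner ℝ w (φ j) : ℝ)
        = t ^ (α - 1) * E (-(lam j * t ^ α)) * (inner ℝ χ (φ j) : ℝ))
    (hχ : Summable fun j => lam j ^ q * (inner ℝ χ (φ j) : ℝ) ^ 2) :
    Real.sqrt (∑' j, lam j ^ p * (inner ℝ w (φ j) : ℝ) ^ 2)
      ≤ c * t ^ (-1 + (1 + (q - p) / 2) * α) *
          Real.sqrt (∑' j, lam j ^ q * (inner ℝ χ (φ j) : ℝ) ^ 2) := by
  have hexp : 1 + (q - p) / 2 = 1 - (p - q) / 2 := by ring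
  rw [hexp]
  exact spectralSobolevNorm_le_of_multiplier hlam hw
    (fun j => rpow_mul_abs_rpow_mul_le hE (by linarith) (by linarith) ht (hlam j)) hχ

/-- Smoothing estimate for the inhomogeneous solution operator
Ē(t)χ = Σ_j t^{α−1} E_{α,α}(−λ_j t^α)(χ,φ_j)φ_j: assuming
|E_{α,α}(−x)| ≤ c/(1+x), for q ≥ −1 and 0 ≤ p−q ≤ 2 one has
‖Ē(t)χ‖_{Ḣ^p} ≤ c t^{−1+(1+(q−p)/2)α} ‖χ‖_{Ḣ^q}. -/
theorem stmt14 {H : Type*} [NormedAddCommGroup H] [InnerProductSpace ℝ H]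
    [CompleteSpace H]
    (φ : ℕ → H) (hφ : Orthonormal ℝ φ)
    (htotal : (Submodule.span ℝ (Set.range φ)).topologicalClosure = ⊤)
    (lam : ℕ → ℝ) (hlam : ∀ j, 0 < lam j)
    (α : ℝ) (hα : 0 < α) (hα2 : α < 2)
    (E : ℝ → ℝ) (c : ℝ) (hE : ∀ x : ℝ, 0 ≤ x → |E (-x)| ≤ c / (1 + x))
    (p q t : ℝ) (hq : -1 ≤ q) (hpq0 : 0 ≤ p - q) (hpq2 : p - q ≤ 2)
    (ht : 0 < t)
    (χ w : H)
    (hw : ∀ j, (inner ℝ w (φ j) : ℝ)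
        = t ^ (α - 1) * E (-(lam j * t ^ α)) * (inner ℝ χ (φ j) : ℝ))
    (hχ : Summable fun j => lam j ^ q * (inner ℝ χ (φ j) : ℝ) ^ 2) :
    Real.sqrt (∑' j, lam j ^ p * (inner ℝ w (φ j) : ℝ) ^ 2)
      ≤ c * t ^ (-1 + (1 + (q - p) / 2) * α) *
          Real.sqrt (∑' j, lam j ^ q * (inner ℝ χ (φ j) : ℝ) ^ 2) :=
  stmt14_general φ lam hlam α E c hE p q t hpq0 hpq2 ht χ w hw hχ
end
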